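/- arXiv:1606.03595 — 7 statements merged into one kernel-verified Lean document; each statement's English description precedes it below -/
import Mathlib

section
/- Suppose R induces a common ranking of lenders. If a matching μ satisfies the equilibrium conditions at level 0, then μ is stable for R. Moreover, every matching μ satisfies Vol(μ) ≤ min(card B, card L). -/
/-- `μ : B → Option L` is a matching if it is injective on matched borrowers. -/
def IsMatching {L B : Type*} (μ : B → Option L) : Prop :=
  ∀ ⦃j j' : B⦄ ⦃i : L⦄, μ j = some i → μ j' = some i → j = j'

/-- Lender `i` is matched under `μ`. -/
def LenderMatched {L B : Type*} (μ : B → Option L) (i : L) : Prop :=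
  ∃ j, μ j = some i

/-- The volume of a matching: the number of matched borrowers. -/
def Vol {L B : Type*} [Fintype B] [DecidableEq L] (μ : B → Option L) : ℕ :=
  (Finset.univ.filter fun j : B => μ j ≠ none).card

/-- Condition (II): no nonempty set `b` of matched borrowers together with a bijection
`π : b → b` such that every member of `b` strictly lowers its rate by swapping to the
lender assigned to its image under `π`. -/
def CondII {L B : Type*} (R : L → B → ℝ) (μ : B → Option L) : Prop :=
  ¬ ∃ (b : Finset B) (π : B → B), b.Nonempty ∧ Set.BijOn π ↑b ↑b ∧
      (∀ j ∈ b, μ j ≠ none) ∧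
      ∀ j ∈ b, ∀ i i' : L, μ j = some i → μ (π j) = some i' → R i' j < R i j

/-- Condition (III): no profitable unilateral deviation involving reservation rates or
unmatched lenders. -/
def CondIII {L B : Type*} (R : L → B → ℝ) (rbar : B → ℝ) (μ : B → Option L) : Prop :=
  (∀ j i, μ j = some i →
      ¬ rbar j < R i j ∧ ∀ k, ¬ LenderMatched μ k → ¬ R k j < R i j) ∧
  (∀ j, μ j = none → ∀ k, ¬ LenderMatched μ k → ¬ R k j < rbar j)

/-- A matching is stable for the rate function `R` if conditions (II) and (III) hold. -/
def Stable {L B : Type*} (R : L → B → ℝ) (rbar : B → ℝ) (μ : B → Option L) : Prop :=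
  CondII R μ ∧ CondIII R rbar μ

/-- `R` induces a common ranking of lenders. -/
def CommonRanking {L B : Type*} (R : L → B → ℝ) : Prop :=
  ∀ (i k : L) (j j' : B), R i j < R k j ↔ R i j' < R k j'

/-- Equilibrium conditions at tax level `c`. -/
def EqCond {L B : Type*} (R : L → B → ℝ) (rbar : B → ℝ) (c : ℝ) (μ : B → Option L) : Prop :=
  (∀ j i, μ j = some i → R i j + c < rbar j) ∧
  (∀ j i, μ j = some i → ∀ k, ¬ LenderMatched μ k → R i j < R k j) ∧
  (∀ j, μ j = none → ∀ k, ¬ LenderMatched μ k → rbar j ≤ R k j + c)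

/-- A matching is feasible if every matched pair trades below the reservation rate. -/
def Feasible {L B : Type*} (R : L → B → ℝ) (rbar : B → ℝ) (μ : B → Option L) : Prop :=
  ∀ j i, μ j = some i → R i j < rbar j


/-- **Equilibrium multiplicity under bilateral contracting.** If `R` induces a common ranking
of lenders, then every matching satisfying the equilibrium conditions at level `0` is stable,
and every matching has volume at most `min (card B) (card L)`. -/
theorem eq_multiplicity_bilateral {L B : Type*} [Fintype L] [Fintype B] [DecidableEq L]
    (R : L → B → ℝ) (rbar : B → ℝ) (hR : CommonRanking R) :
    (∀ μ : B → Option L, IsMatching μ → EqCond R rbar 0 μ → Stable R rbar μ) ∧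
    (∀ μ : B → Option L, IsMatching μ →
      Vol μ ≤ min (Fintype.card B) (Fintype.card L)) := by
  constructor
  · intro μ hμ hEq
    obtain ⟨h1, h2, h3⟩ := hEq
    constructor
    · -- CondII
      rintro ⟨b, π, ⟨j0, hj0⟩, hbij, hmatched, himp⟩
      obtain ⟨i0, hi0⟩ : ∃ i, μ j0 = some i := Option.ne_none_iff_exists'.mp (hmatched j0 hj0)
      haveI : Inhabited L := ⟨i0⟩
      set l : B → L := fun j => (μ j).iget with hl
      have hlspec : ∀ j ∈ b, μ j = some (l j) := by
        intro j hj
        obtain ⟨i, hi⟩ : ∃ i, μ j = some i := Option.ne_none_iff_exists'.mp (hmatched j hj)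
        simp [hl, hi]
      have hlt : ∀ j ∈ b, R (l (π j)) j0 < R (l j) j0 := by
        intro j hj
        have hπj : π j ∈ b := hbij.mapsTo hj
        have := himp j hj (l j) (l (π j)) (hlspec j hj) (hlspec (π j) hπj)
        exact (hR (l (π j)) (l j) j j0).mp this
      have hsum : ∑ j ∈ b, R (l (π j)) j0 = ∑ j ∈ b, R (l j) j0 :=
        Finset.sum_bij (fun j _ => π j)
          (fun j hj => hbij.mapsTo hj)
          (fun j hj j' hj' h => hbij.injOn hj hj' h)
          (fun j hj => by
            obtain ⟨x, hx, hxe⟩ := hbij.surjOn hj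
            exact ⟨x, hx, hxe⟩)
          (fun j hj => rfl)
      have hslt : ∑ j ∈ b, R (l (π j)) j0 < ∑ j ∈ b, R (l j) j0 :=
        Finset.sum_lt_sum_of_nonempty ⟨j0, hj0⟩ hlt
      exact absurd hsum (ne_of_lt hslt)
    · -- CondIII
      constructor
      · intro j i hj
        constructor
        · have := h1 j i hj
          simp only [add_zero] at this
          exact not_lt_of_gt this
        · intro k hk
          exact not_lt_of_gt (h2 j i hj k hk)
      · intro j hj k hk
        have := h3 j hj k hk
        simp only [add_zero] at this
        exact not_lt_of_ge this
  · intro μ hμ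
    refine le_min ?_ ?_
    · exact (Finset.card_filter_le _ _).trans_eq (Finset.card_univ)
    · have : ∀ j ∈ Finset.univ.filter (fun j : B => μ j ≠ none), ∃ i, μ j = some i := by
        intro j hj
        simp only [Finset.mem_filter] at hj
        exact Option.ne_none_iff_exists'.mp hj.2
      classical
      have hcard := Finset.card_le_card_of_injOn
        (f := fun j => μ j)
        (s := Finset.univ.filter (fun j : B => μ j ≠ none))
        (t := Finset.univ.image (some : L → Option L))
        ?_ ?_
      · have : (Finset.univ.image (some : L → Option L)).card = Fintype.card L := by
          rw [Finset.card_image_of_injective _ (Option.some_injective L), Finset.card_univ]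
        rw [Vol, ← this]
        exact hcard
      · intro j hj
        obtain ⟨i, hi⟩ := this j hj
        simp [hi]
      · intro j hj j' hj' h
        obtain ⟨i, hi⟩ := this j (Finset.mem_coe.mp hj)
        obtain ⟨i', hi'⟩ := this j' (Finset.mem_coe.mp hj')
        simp only at h
        rw [hi, hi'] at h
        exact hμ hi (h ▸ hi')
end

section
/- Suppose R induces a common ranking of lenders. Then every matching μ satisfies condition (II): there is no nonempty set b of matched borrowers together with a bijection π : b → b such that R i' j < R i j for every j ∈ b, where μ j = some i and μ (π j) = some i'. In other words, when all borrowers rank lenders identically, no group of matched borrowers can exchange their assigned lenders so that every member of the group strictly lowers the rate it pays. -/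
/-- **No coalitional deviation under homogeneous preferences.** If `R` induces a common
ranking of lenders, then every matching satisfies condition (II): no group of matched
borrowers can exchange their assigned lenders so that every member strictly lowers the
rate it pays. -/
theorem no_coalitional_deviation {L B : Type*}
    (R : L → B → ℝ) (hR : CommonRanking R)
    (μ : B → Option L) (hμ : IsMatching μ) : CondII R μ := by
  rintro ⟨b, π, hne, hbij, hmat, hlt⟩
  obtain ⟨j₀, hj₀⟩ := hne
  obtain ⟨i₀, hi₀⟩ := Option.ne_none_iff_exists'.mp (hmat j₀ hj₀)
  set f : B → ℝ := fun j => R ((μ j).getD i₀) j₀ with hf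
  have key : ∀ j ∈ b, f (π j) < f j := by
    intro j hj
    have hπj : π j ∈ b := hbij.mapsTo hj
    obtain ⟨i, hi⟩ := Option.ne_none_iff_exists'.mp (hmat j hj)
    obtain ⟨i', hi'⟩ := Option.ne_none_iff_exists'.mp (hmat (π j) hπj)
    have h1 : R i' j < R i j := hlt j hj i i' hi hi'
    have h2 : R i' j₀ < R i j₀ := (hR i' i j j₀).mp h1
    simpa [f, hi, hi'] using h2
  have hsum_eq : ∑ j ∈ b, f (π j) = ∑ j ∈ b, f j := by
    refine Finset.sum_bij (fun j _ => π j) (fun j hj => hbij.mapsTo hj) ?_ ?_ ?_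
    · intro a ha a' ha' h
      exact hbij.injOn ha ha' h
    · intro y hy
      obtain ⟨x, hx, hxy⟩ := hbij.surjOn hy
      exact ⟨x, hx, hxy⟩
    · intro a _; rfl
  have hsum_lt : ∑ j ∈ b, f (π j) < ∑ j ∈ b, f j :=
    Finset.sum_lt_sum_of_nonempty ⟨j₀, hj₀⟩ key
  exact absurd hsum_eq (ne_of_lt hsum_lt)
end

section
/- Let μ be any feasible matching, i.e. R i j < r̄ j for every matched pair μ j = some i. Then there exist taxes τ : L → B → ℝ with τ i j ≥ 0 for all i, j such that μ is stable for the taxed rate function R^τ, and μ is the unique such matching: every matching that is stable for R^τ is equal to μ. -/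
/-- **Equilibrium uniqueness under a systemic risk tax.** Any feasible matching can be
sustained as the unique stable matching under an appropriately chosen nonnegative
transaction-specific tax. -/
theorem srt_unique_stable_matching {L B : Type*} [Fintype L] [Fintype B]
    (R : L → B → ℝ) (rbar : B → ℝ)
    (μ : B → Option L) (hμ : IsMatching μ) (hfeas : Feasible R rbar μ) :
    ∃ τ : L → B → ℝ, (∀ i j, 0 ≤ τ i j) ∧
      Stable (fun i j => R i j + τ i j) rbar μ ∧
      ∀ μ' : B → Option L, IsMatching μ' →
        Stable (fun i j => R i j + τ i j) rbar μ' → μ' = μ := by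
  classical
  obtain ⟨M0, hM0⟩ := Finset.exists_le
    ((Finset.univ.image fun p : L × B => R p.1 p.2) ∪ Finset.univ.image rbar)
  set M := M0 + 1 with hMdef
  have hRM : ∀ i j, R i j < M := by
    intro i j
    have : R i j ≤ M0 := hM0 _ (by
      simp only [Finset.mem_union, Finset.mem_image]
      exact Or.inl ⟨(i, j), Finset.mem_univ _, rfl⟩)
    linarith
  have hrM : ∀ j, rbar j < M := by
    intro j
    have : rbar j ≤ M0 := hM0 _ (by
      simp only [Finset.mem_union, Finset.mem_image]
      exact Or.inr ⟨j, Finset.mem_univ _, rfl⟩)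
    linarith
  refine ⟨fun i j => if μ j = some i then 0 else M - R i j, ?_, ⟨?_, ?_, ?_⟩, ?_⟩
  · intro i j
    simp only
    split
    · exact le_refl 0
    · linarith [hRM i j]
  · -- CondII
    rintro ⟨b, π, ⟨j0, hj0⟩, hbij, hmatch, hlt⟩
    obtain ⟨i, hi⟩ := Option.ne_none_iff_exists'.mp (hmatch j0 hj0)
    have hπ : π j0 ∈ b := hbij.mapsTo hj0
    obtain ⟨i', hi'⟩ := Option.ne_none_iff_exists'.mp (hmatch _ hπ)
    have h := hlt j0 hj0 i i' hi hi'
    by_cases hii : i' = i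
    · subst hii
      simp [hi] at h
    · have hni' : ¬ μ j0 = some i' := by
        rw [hi]; simp [Ne.symm hii]
      simp only [if_pos hi, if_neg hni'] at h
      linarith [hRM i j0]
  · -- CondIII part 1
    intro j i hji
    refine ⟨by simp [hji]; linarith [hfeas j i hji], ?_⟩
    intro k hk
    have hkj : ¬ μ j = some k := fun h => hk ⟨j, h⟩
    simp only [if_pos hji, if_neg hkj]
    intro hc
    linarith [hRM i j]
  · -- CondIII part 2
    intro j hj k _
    have hkj : ¬ μ j = some k := by simp [hj]
    simp only [hkj, if_neg]
    simp
    linarith [hrM j]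
  · -- uniqueness
    intro μ' hμ' hst'
    have key : ∀ j i, μ' j = some i → μ j = some i := by
      intro j i h
      by_contra hne
      have h1 := (hst'.2.1 j i h).1
      simp only [hne, if_neg] at h1
      simp at h1
      linarith [hrM j]
    funext j
    cases hj' : μ' j with
    | none =>
      cases hj : μ j with
      | none => rfl
      | some i =>
        exfalso
        by_cases hm : LenderMatched μ' i
        · obtain ⟨j2, hj2⟩ := hm
          have hj2' := key j2 i hj2
          have : j2 = j := hμ hj2' hj
          rw [this] at hj2
          rw [hj2] at hj'
          exact Option.some_ne_none _ hj'
        · have h2 := hst'.2.2 j hj' i hm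
          simp only [hj, if_pos rfl] at h2
          simp at h2
          linarith [hfeas j i hj]
    | some i =>
      rw [key j i hj']
end

section
/- Let κ ≥ 0 be a Tobin-like tax and let R^κ denote the rate function R^κ i j = R i j + κ. Suppose R induces a common ranking of lenders. If a matching μ satisfies the equilibrium conditions at level κ, then μ is stable for R^κ. -/
/-- **Stability under a Tobin-like tax.** If `R` induces a common ranking of lenders and a
matching satisfies the equilibrium conditions at level `κ ≥ 0`, then it is stable for the
taxed rate function `fun i j => R i j + κ`. -/
theorem tobin_tax_stable {L B : Type*}
    (R : L → B → ℝ) (rbar : B → ℝ) (κ : ℝ) (hκ : 0 ≤ κ)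
    (hR : CommonRanking R) (μ : B → Option L) (hμ : IsMatching μ)
    (heq : EqCond R rbar κ μ) :
    Stable (fun i j => R i j + κ) rbar μ := by
  obtain ⟨h1, h2, h3⟩ := heq
  constructor
  · -- CondII
    rintro ⟨b, π, ⟨j₀, hj₀⟩, hbij, hmatched, hswap⟩
    -- define g j = R (lender j) j₀
    set g : B → ℝ := fun j => match μ j with | some i => R i j₀ | none => 0 with hg
    have key : ∀ j ∈ b, g (π j) < g j := by
      intro j hj
      obtain ⟨i, hi⟩ := Option.ne_none_iff_exists'.mp (hmatched j hj)
      have hπj : π j ∈ b := hbij.mapsTo hj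
      obtain ⟨i', hi'⟩ := Option.ne_none_iff_exists'.mp (hmatched _ hπj)
      have := hswap j hj i i' hi hi'
      simp only [] at this
      have hlt : R i' j < R i j := by linarith
      have : R i' j₀ < R i j₀ := (hR i' i j j₀).mp hlt
      simp only [hg, hi, hi']
      exact this
    have hsum : ∑ j ∈ b, g (π j) = ∑ j ∈ b, g j := by
      apply Finset.sum_bij (fun j _ => π j)
      · intro a ha; exact hbij.mapsTo ha
      · intro a ha a' ha' h; exact hbij.injOn ha ha' h
      · intro c hc
        obtain ⟨a, ha, rfl⟩ := hbij.surjOn hc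
        exact ⟨a, ha, rfl⟩
      · intro a _; rfl
    have hlt : ∑ j ∈ b, g (π j) < ∑ j ∈ b, g j :=
      Finset.sum_lt_sum_of_nonempty ⟨j₀, hj₀⟩ key
    exact absurd hsum (ne_of_lt hlt)
  · constructor
    · intro j i hji
      refine ⟨?_, ?_⟩
      · have := h1 j i hji
        simp only []
        linarith
      · intro k hk
        have := h2 j i hji k hk
        simp only []
        linarith
    · intro j hj k hk
      have := h3 j hj k hk
      simp only []
      linarith
end

section
/- Suppose that for every borrower j the map i ↦ R i j is injective on L (no two lenders charge the same rate to the same borrower). Let κ ≥ 0. Then for every matching μ satisfying the equilibrium conditions at level κ there exists a matching μ' satisfying the equilibrium conditions at level 0 with Vol(μ') ≥ Vol(μ). In particular, the maximum volume over matchings satisfying the equilibrium conditions at level κ is at most the maximum volume over matchings satisfying the equilibrium conditions at level 0: a Tobin-like tax can only reduce the maximal trading volume. -/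
open Classical

/-- **A Tobin-like tax can only reduce the maximal trading volume.** If no two lenders charge
the same rate to any given borrower, then every matching satisfying the equilibrium conditions
at level `κ ≥ 0` is dominated in volume by some matching satisfying the equilibrium conditions
at level `0`; in particular the maximal equilibrium volume at level `κ` is at most the maximal
equilibrium volume at level `0`. -/
theorem tobin_tax_volume {L B : Type*} [Fintype L] [Fintype B] [DecidableEq L] [DecidableEq B]
    (R : L → B → ℝ) (rbar : B → ℝ)
    (hinj : ∀ j : B, Function.Injective fun i : L => R i j)
    (κ : ℝ) (hκ : 0 ≤ κ) :
    (∀ μ : B → Option L, IsMatching μ → EqCond R rbar κ μ →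
        ∃ μ' : B → Option L, IsMatching μ' ∧ EqCond R rbar 0 μ' ∧ Vol μ ≤ Vol μ') ∧
    (Finset.univ.filter fun μ : B → Option L => IsMatching μ ∧ EqCond R rbar κ μ).sup Vol ≤
      (Finset.univ.filter fun μ : B → Option L => IsMatching μ ∧ EqCond R rbar 0 μ).sup Vol := by
  classical
  have main : ∀ μ : B → Option L, IsMatching μ → EqCond R rbar κ μ →
      ∃ μ' : B → Option L, IsMatching μ' ∧ EqCond R rbar 0 μ' ∧ Vol μ ≤ Vol μ' := by
    intro μ hμ heq
    obtain ⟨h1, h2, h3⟩ := heq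
    set T : Finset (B → Option L) := Finset.univ.filter (fun ν =>
      IsMatching ν ∧ (∀ j i, μ j = some i → ν j = some i) ∧
      (∀ j i, ν j = some i → R i j < rbar j) ∧
      (∀ j i, ν j = some i → ∀ k, ¬ LenderMatched ν k → R i j < R k j)) with hT
    have hμT : μ ∈ T := by
      simp only [hT, Finset.mem_filter, Finset.mem_univ, true_and]
      refine ⟨hμ, fun j i h => h, fun j i h => ?_, h2⟩
      have := h1 j i h; linarith
    obtain ⟨ν, hνT, hmax⟩ := T.exists_max_image Vol ⟨μ, hμT⟩
    simp only [hT, Finset.mem_filter, Finset.mem_univ, true_and] at hνT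
    obtain ⟨hν, hext, hfeas, hcond2⟩ := hνT
    refine ⟨ν, hν, ⟨?_, ?_, ?_⟩, ?_⟩
    · intro j i h; have := hfeas j i h; linarith
    · intro j i h k hk; exact hcond2 j i h k hk
    · -- condition (III) at level 0
      intro j hj k hk
      by_contra hlt
      push_neg at hlt
      have hklt : R k j < rbar j := by linarith
      obtain ⟨k₀, hk₀mem, hk₀min⟩ :=
        (Finset.univ.filter fun k' : L => ¬ LenderMatched ν k').exists_min_image
          (fun k' => R k' j) ⟨k, by simp [hk]⟩
      simp only [Finset.mem_filter, Finset.mem_univ, true_and] at hk₀mem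
      have hk₀lt : R k₀ j < rbar j :=
        lt_of_le_of_lt (hk₀min k (by simp [hk])) hklt
      set ν' := Function.update ν j (some k₀) with hν'def
      have hν'j : ν' j = some k₀ := Function.update_self j (some k₀) ν
      have hν'ne : ∀ j' : B, j' ≠ j → ν' j' = ν j' := fun j' h =>
        Function.update_of_ne h (some k₀) ν
      have hunm : ∀ k' : L, ¬ LenderMatched ν' k' → ¬ LenderMatched ν k' := by
        intro k' h hc
        obtain ⟨j'', hj''⟩ := hc
        have hne : j'' ≠ j := by intro he; rw [he, hj] at hj''; exact nomatch hj''
        exact h ⟨j'', by rw [hν'ne j'' hne]; exact hj''⟩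
      have hν'T : ν' ∈ T := by
        simp only [hT, Finset.mem_filter, Finset.mem_univ, true_and]
        refine ⟨?_, ?_, ?_, ?_⟩
        · intro j1 j2 i hj1 hj2
          by_cases e1 : j1 = j <;> by_cases e2 : j2 = j
          · rw [e1, e2]
          · exfalso
            rw [e1, hν'j] at hj1
            rw [hν'ne j2 e2] at hj2
            exact hk₀mem ⟨j2, by rw [hj2, ← Option.some_inj.mp hj1]⟩
          · exfalso
            rw [e2, hν'j] at hj2
            rw [hν'ne j1 e1] at hj1
            exact hk₀mem ⟨j1, by rw [hj1, ← Option.some_inj.mp hj2]⟩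
          · rw [hν'ne j1 e1] at hj1; rw [hν'ne j2 e2] at hj2; exact hν hj1 hj2
        · intro j' i h
          by_cases e : j' = j
          · exfalso; rw [e] at h; have := hext j i h; rw [hj] at this
            exact nomatch this
          · rw [hν'ne j' e]; exact hext j' i h
        · intro j' i h
          by_cases e : j' = j
          · rw [e, hν'j] at h
            rw [e, ← Option.some_inj.mp h] at *
            exact hk₀lt
          · rw [hν'ne j' e] at h; exact hfeas j' i h
        · intro j' i h k' hk'
          have hk'ν : ¬ LenderMatched ν k' := hunm k' hk'
          by_cases e : j' = j
          · rw [e, hν'j] at h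
            have hik : i = k₀ := Option.some_inj.mp h.symm
            have hne : k' ≠ k₀ := by
              intro he; exact hk' ⟨j, by rw [hν'j, he]⟩
            have hle : R k₀ j' ≤ R k' j' := by
              rw [e]; exact hk₀min k' (by simp [hk'ν])
            have : R k₀ j' ≠ R k' j' := by
              rw [e]; intro he; exact hne (hinj j he.symm)
            rw [hik]; exact lt_of_le_of_ne hle this
          · rw [hν'ne j' e] at h; exact hcond2 j' i h k' hk'ν
      have hvol : Vol ν < Vol ν' := by
        apply Finset.card_lt_card
        constructor
        · intro j' hj'
          simp only [Finset.mem_filter, Finset.mem_univ, true_and] at *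
          intro hc
          have hne : j' ≠ j := by intro he; rw [he] at hj'; exact hj' hj
          rw [hν'ne j' hne] at hc; exact hj' hc
        · intro hsub
          have : j ∈ Finset.univ.filter fun j' : B => ν' j' ≠ none := by
            simp only [Finset.mem_filter, Finset.mem_univ, true_and]
            rw [hν'j]; exact Option.some_ne_none k₀
          have := hsub this
          simp only [Finset.mem_filter, Finset.mem_univ, true_and] at this
          exact this hj
      exact absurd (hmax ν' hν'T) (not_le.mpr hvol)
    · apply Finset.card_le_card
      intro j' hj'
      simp only [Finset.mem_filter, Finset.mem_univ, true_and] at *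
      obtain ⟨i, hi⟩ := Option.ne_none_iff_exists'.mp hj'
      rw [hext j' i hi]; exact Option.some_ne_none i
  refine ⟨main, ?_⟩
  apply Finset.sup_le
  intro μ hμ
  simp only [Finset.mem_filter, Finset.mem_univ, true_and] at hμ
  obtain ⟨μ', hμ'1, hμ'2, hμ'3⟩ := main μ hμ.1 hμ.2
  exact le_trans hμ'3 (Finset.le_sup (by simp [hμ'1, hμ'2]))
end

section
/- Let f : (B → Option L) → ℝ be an arbitrary function (interpreted as the expected systemic loss of the exposure network formed by a matching; no property of f is used). Let μ* be a matching satisfying the equilibrium conditions at level 0. Then there exist taxes τ : L → B → ℝ with τ i j ≥ 0 and a feasible matching μ' such that: μ' is stable for R^τ and every matching stable for R^τ equals μ'; Vol(μ') ≥ Vol(μ*); f(μ') ≤ f(μ*); and f(μ') ≤ f(μ) for every feasible matching μ with Vol(μ) ≥ Vol(μ*) (i.e. μ' is systemic-risk efficient among feasible matchings of at least the same volume). -/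
/-- **Systemic risk under a systemic risk tax.** For any untaxed equilibrium matching `μ*`
there is a nonnegative transaction-specific tax `τ` sustaining, as the unique stable matching,
a feasible matching `μ'` with at least the volume of `μ*`, at most its expected systemic loss
`f`, and minimal `f` among all feasible matchings with at least the volume of `μ*`. -/
theorem srt_systemic_risk_efficient {L B : Type*} [Fintype L] [Fintype B] [DecidableEq L]
    (R : L → B → ℝ) (rbar : B → ℝ) (f : (B → Option L) → ℝ)
    (μstar : B → Option L) (hμ : IsMatching μstar) (heq : EqCond R rbar 0 μstar) :
    ∃ (τ : L → B → ℝ) (μ' : B → Option L), (∀ i j, 0 ≤ τ i j) ∧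
      IsMatching μ' ∧ Feasible R rbar μ' ∧
      Stable (fun i j => R i j + τ i j) rbar μ' ∧
      (∀ μ'' : B → Option L, IsMatching μ'' →
        Stable (fun i j => R i j + τ i j) rbar μ'' → μ'' = μ') ∧
      Vol μstar ≤ Vol μ' ∧ f μ' ≤ f μstar ∧
      ∀ μ : B → Option L, IsMatching μ → Feasible R rbar μ →
        Vol μstar ≤ Vol μ → f μ' ≤ f μ := by
  classical
  -- choose μ' minimizing f among feasible matchings of volume ≥ Vol μstar
  set s : Finset (B → Option L) :=
    Finset.univ.filter
      (fun μ => IsMatching μ ∧ Feasible R rbar μ ∧ Vol μstar ≤ Vol μ) with hs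
  have hstar_mem : μstar ∈ s := by
    simp only [hs, Finset.mem_filter, Finset.mem_univ, true_and]
    refine ⟨hμ, ?_, le_refl _⟩
    intro j i hji
    have := heq.1 j i hji
    linarith
  obtain ⟨μ', hμ'mem, hmin⟩ := s.exists_min_image f ⟨μstar, hstar_mem⟩
  have hμ'prop : IsMatching μ' ∧ Feasible R rbar μ' ∧ Vol μstar ≤ Vol μ' := by
    simpa [hs] using hμ'mem
  obtain ⟨hM', hF', hV'⟩ := hμ'prop
  -- a large constant
  set g : L × L × B → ℝ :=
    fun p => max (rbar p.2.2 - R p.2.1 p.2.2) (R p.1 p.2.2 - R p.2.1 p.2.2) with hg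
  obtain ⟨M, hM⟩ := (Set.finite_range g).bddAbove
  set C : ℝ := max M 0 + 1 with hC
  have hC0 : 0 < C := by
    have : (0:ℝ) ≤ max M 0 := le_max_right _ _
    linarith
  have hC1 : ∀ (i k : L) (j : B), rbar j < R k j + C := by
    intro i k j
    have h1 : g (i, k, j) ≤ M := hM (Set.mem_range_self _)
    have h2 : rbar j - R k j ≤ g (i, k, j) := le_max_left _ _
    have : M ≤ max M 0 := le_max_left _ _
    simp only [hC]; linarith
  have hC2 : ∀ (i k : L) (j : B), R i j < R k j + C := by
    intro i k j
    have h1 : g (i, k, j) ≤ M := hM (Set.mem_range_self _)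
    have h2 : R i j - R k j ≤ g (i, k, j) := le_max_right _ _
    have : M ≤ max M 0 := le_max_left _ _
    simp only [hC]; linarith
  -- the tax
  set τ : L → B → ℝ := fun i j => if μ' j = some i then 0 else C with hτ
  have hτ0 : ∀ i j, μ' j = some i → τ i j = 0 := by
    intro i j h; simp [hτ, h]
  have hτC : ∀ i j, μ' j ≠ some i → τ i j = C := by
    intro i j h; simp [hτ, h]
  refine ⟨τ, μ', ?_, hM', hF', ?_, ?_, hV', ?_, ?_⟩
  · intro i j
    by_cases h : μ' j = some i
    · simp [hτ, h]
    · simp [hτ, h]; linarith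
  · -- stability of μ'
    constructor
    · -- CondII
      rintro ⟨b, π, ⟨j, hjb⟩, hbij, hmatched, hswap⟩
      obtain ⟨i, hi⟩ := Option.ne_none_iff_exists'.mp (hmatched j hjb)
      have hπb : π j ∈ (b : Set B) := hbij.1 hjb
      obtain ⟨i', hi'⟩ := Option.ne_none_iff_exists'.mp (hmatched (π j) hπb)
      have hlt := hswap j hjb i i' hi hi'
      simp only [] at hlt
      rw [hτ0 i j hi] at hlt
      by_cases hii : i' = i
      · subst hii
        rw [hτ0 i' j hi] at hlt
        linarith
      · have : μ' j ≠ some i' := by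
          intro h; rw [hi] at h; exact hii (Option.some.inj h).symm
        rw [hτC i' j this] at hlt
        have := hC2 i i' j
        linarith
    · constructor
      · intro j i hji
        simp only []
        rw [hτ0 i j hji]
        refine ⟨by simp; linarith [hF' j i hji], ?_⟩
        intro k hk
        have hki : μ' j ≠ some k := by
          intro h; exact hk ⟨j, h⟩
        rw [hτC k j hki]
        have := hC2 i k j
        linarith
      · intro j hj k hk
        have hkj : μ' j ≠ some k := by rw [hj]; simp
        simp only []
        rw [hτC k j hkj]
        have := hC1 k k j
        linarith
  · -- uniqueness
    intro μ'' hM'' hS''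
    funext j
    rcases h' : μ' j with _ | i
    · rcases h'' : μ'' j with _ | k
      · rfl
      · exfalso
        have := (hS''.2.1 j k h'').1
        simp only [] at this
        rw [hτC k j (by rw [h']; simp)] at this
        exact this (hC1 k k j)
    · rcases h'' : μ'' j with _ | k
      · exfalso
        by_cases hi : LenderMatched μ'' i
        · obtain ⟨j₂, hj₂⟩ := hi
          have hne : μ' j₂ ≠ some i := by
            intro h
            have : j₂ = j := hM' h h'
            rw [this, h''] at hj₂; exact Option.some_ne_none i hj₂.symm
          have := (hS''.2.1 j₂ i hj₂).1
          simp only [] at this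
          rw [hτC i j₂ hne] at this
          exact this (hC1 i i j₂)
        · have := hS''.2.2 j h'' i hi
          simp only [] at this
          rw [hτ0 i j h'] at this
          have := hF' j i h'
          simp at *
          linarith
      · by_cases hik : k = i
        · rw [hik]
        · exfalso
          have := (hS''.2.1 j k h'').1
          simp only [] at this
          rw [hτC k j (by rw [h']; simp [Ne.symm hik])] at this
          exact this (hC1 k k j)
  · exact hmin μstar hstar_mem
  · intro μ hm hf hv
    exact hmin μ (by simp [hs, hm, hf, hv])
end

section
/- Let f : (B → Option L) → ℝ be an arbitrary function (interpreted as the expected systemic loss of the exposure network formed by a matching; no property of f is used). Let κ ≥ 0 and let μ* be a matching satisfying the equilibrium conditions at level κ (an equilibrium under a Tobin-like tax κ). Then there exist taxes τ : L → B → ℝ with τ i j ≥ 0 and a feasible matching μ' such that: μ' is stable for R^τ and every matching stable for R^τ equals μ'; Vol(μ') ≥ Vol(μ*); f(μ') ≤ f(μ*); and f(μ') ≤ f(μ) for every feasible matching μ with Vol(μ) ≥ Vol(μ*). -/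
/-- **Systemic risk tax dominates a Tobin-like tax.** For any equilibrium matching `μ*` under
a Tobin-like tax `κ ≥ 0` there is a nonnegative transaction-specific tax `τ` sustaining, as
the unique stable matching, a feasible matching `μ'` with at least the volume of `μ*`, at most
its expected systemic loss `f`, and minimal `f` among all feasible matchings with at least the
volume of `μ*`. -/
theorem srt_dominates_tobin {L B : Type*} [Fintype L] [Fintype B] [DecidableEq L]
    (R : L → B → ℝ) (rbar : B → ℝ) (f : (B → Option L) → ℝ)
    (κ : ℝ) (hκ : 0 ≤ κ)
    (μstar : B → Option L) (hμ : IsMatching μstar) (heq : EqCond R rbar κ μstar) :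
    ∃ (τ : L → B → ℝ) (μ' : B → Option L), (∀ i j, 0 ≤ τ i j) ∧
      IsMatching μ' ∧ Feasible R rbar μ' ∧
      Stable (fun i j => R i j + τ i j) rbar μ' ∧
      (∀ μ'' : B → Option L, IsMatching μ'' →
        Stable (fun i j => R i j + τ i j) rbar μ'' → μ'' = μ') ∧
      Vol μstar ≤ Vol μ' ∧ f μ' ≤ f μstar ∧
      ∀ μ : B → Option L, IsMatching μ → Feasible R rbar μ →
        Vol μstar ≤ Vol μ → f μ' ≤ f μ := by
  classical
  -- μ* is feasible
  have hfeasstar : Feasible R rbar μstar := by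
    intro j i hji
    have := heq.1 j i hji
    linarith
  -- minimize f over feasible matchings with enough volume
  set S : Set (B → Option L) :=
    {μ | IsMatching μ ∧ Feasible R rbar μ ∧ Vol μstar ≤ Vol μ} with hS
  have hSfin : S.Finite := Set.toFinite S
  have hstarS : μstar ∈ S := ⟨hμ, hfeasstar, le_refl _⟩
  obtain ⟨μ', hμ'S, hmin⟩ := Set.exists_min_image S f hSfin ⟨μstar, hstarS⟩
  obtain ⟨hμ'M, hμ'F, hμ'V⟩ := hμ'S
  -- pick a large constant M
  have hTfin : (Set.range (fun p : L × B => rbar p.2 - R p.1 p.2) ∪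
      Set.range (fun p : L × L × B => R p.2.1 p.2.2 - R p.1 p.2.2)).Finite :=
    (Set.finite_range _).union (Set.finite_range _)
  obtain ⟨M0, hM0⟩ := hTfin.bddAbove
  set M : ℝ := max M0 0 + 1 with hMdef
  have hMpos : 0 < M := by
    have : (0:ℝ) ≤ max M0 0 := le_max_right _ _
    linarith
  have hM1 : ∀ k j, rbar j < R k j + M := by
    intro k j
    have h1 : rbar j - R k j ≤ M0 := hM0 (Set.mem_union_left _ ⟨(k, j), rfl⟩)
    have h2 : M0 ≤ max M0 0 := le_max_left _ _
    simp only [hMdef]; linarith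
  have hM2 : ∀ i k j, R i j < R k j + M := by
    intro i k j
    have h1 : R i j - R k j ≤ M0 := hM0 (Set.mem_union_right _ ⟨(k, i, j), rfl⟩)
    have h2 : M0 ≤ max M0 0 := le_max_left _ _
    simp only [hMdef]; linarith
  -- the tax
  refine ⟨fun i j => if μ' j = some i then 0 else M, μ', ?_, hμ'M, hμ'F, ?_, ?_, hμ'V,
    hmin μstar hstarS, fun μ hM hF hV => hmin μ ⟨hM, hF, hV⟩⟩
  · intro i j
    by_cases h : μ' j = some i <;> simp [h, hMpos.le]
  · constructor
    · -- CondII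
      rintro ⟨b, π, hne, hbij, hmatch, hlt⟩
      by_cases hfix : ∀ j ∈ b, π j = j
      · obtain ⟨j0, hj0⟩ := hne
        obtain ⟨i0, hi0⟩ := Option.ne_none_iff_exists'.mp (hmatch j0 hj0)
        have := hlt j0 hj0 i0 i0 hi0 (by rw [hfix j0 hj0]; exact hi0)
        exact lt_irrefl _ this
      · push_neg at hfix
        obtain ⟨j, hj, hπj⟩ := hfix
        obtain ⟨i, hi⟩ := Option.ne_none_iff_exists'.mp (hmatch j hj)
        have hπjb : π j ∈ b := hbij.1 hj
        obtain ⟨i', hi'⟩ := Option.ne_none_iff_exists'.mp (hmatch (π j) hπjb)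
        have hne' : i' ≠ i := by
          intro h; exact hπj (hμ'M (h ▸ hi') hi)
        have h0 := hlt j hj i i' hi hi'
        dsimp only at h0
        have e1 : (if μ' j = some i' then (0:ℝ) else M) = M := by
          rw [hi]; exact if_neg (fun h => hne' (Option.some_injective _ h).symm)
        have e2 : (if μ' j = some i then (0:ℝ) else M) = 0 := if_pos hi
        rw [e1, e2] at h0
        have := hM2 i i' j
        linarith
    · -- CondIII
      constructor
      · intro j i hji
        have e2 : (if μ' j = some i then (0:ℝ) else M) = 0 := if_pos hji
        refine ⟨?_, ?_⟩
        · dsimp only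
          rw [e2]
          have := hμ'F j i hji
          push_neg
          linarith
        · intro k hk
          have hkne : μ' j ≠ some k := fun h => hk ⟨j, h⟩
          dsimp only
          rw [e2, if_neg hkne]
          have := hM2 i k j
          push_neg
          linarith
      · intro j hjn k hk
        have hkne : μ' j ≠ some k := by rw [hjn]; exact fun h => nomatch h
        dsimp only
        rw [if_neg hkne]
        have := hM1 k j
        push_neg
        linarith
  · -- uniqueness
    intro μ'' hM'' hS''
    funext j
    cases hj' : μ' j with
    | none =>
      cases hj'' : μ'' j with
      | none => rfl
      | some i'' =>
        exfalso
        have h1 := (hS''.2.1 j i'' hj'').1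
        have hne : μ' j ≠ some i'' := by rw [hj']; exact fun h => nomatch h
        dsimp only at h1
        rw [if_neg hne] at h1
        exact h1 (hM1 i'' j)
    | some i =>
      cases hj'' : μ'' j with
      | none =>
        exfalso
        -- i must be unmatched under μ''
        have hiun : ¬ LenderMatched μ'' i := by
          rintro ⟨j', hj'eq⟩
          have hjne : j' ≠ j := fun h => by rw [h, hj''] at hj'eq; exact nomatch hj'eq
          have h1 := (hS''.2.1 j' i hj'eq).1
          have hne : μ' j' ≠ some i := fun h => hjne (hμ'M h hj')
          dsimp only at h1
          rw [if_neg hne] at h1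
          exact h1 (hM1 i j')
        have h2 := hS''.2.2 j hj'' i hiun
        dsimp only at h2
        rw [if_pos hj'] at h2
        exact h2 (by have := hμ'F j i hj'; linarith)
      | some i'' =>
        by_cases hii : i'' = i
        · rw [hii]
        · exfalso
          have h1 := (hS''.2.1 j i'' hj'').1
          have hne : μ' j ≠ some i'' := by
            rw [hj']; exact fun h => hii (Option.some_injective _ h).symm
          dsimp only at h1
          rw [if_neg hne] at h1
          exact h1 (hM1 i'' j)
end
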